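/- The function λ : (0,∞) → ℝ defined by λ(x) = Γ(x+1) / (√(2πx) · (x/e)^x) − 1 is strictly decreasing on (0,∞); that is, for all real numbers 0 < x₁ < x₂ one has λ(x₁) > λ(x₂). -/

import Mathlib

open Real

/-- The function `λ(x) = Γ(x+1) / (√(2πx)·(x/e)^x) − 1`. -/
noncomputable def stirlingLambda (x : ℝ) : ℝ :=
  Real.Gamma (x + 1) / (Real.sqrt (2 * π * x) * (x / Real.exp 1) ^ x) - 1
open Filter Finset Topology

noncomputable def sG (x : ℝ) : ℝ :=
  Real.log (Real.Gamma (x + 1)) - Real.log (2 * π * x) / 2 - x * (Real.log x - 1)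

noncomputable def sH (t : ℝ) : ℝ :=
  (t + 1 / 2) * (Real.log (t + 1) - Real.log t) - 1

noncomputable def sQ (t : ℝ) : ℝ :=
  1 / (2 * t) + 1 / (2 * (t + 1)) - (Real.log (t + 1) - Real.log t)

lemma stirlingLambda_eq {x : ℝ} (hx : 0 < x) :
    stirlingLambda x = Real.exp (sG x) - 1 := by
  have hΓ : 0 < Real.Gamma (x + 1) := Real.Gamma_pos_of_pos (by linarith)
  have h2πx : 0 < 2 * π * x := by positivity
  have hxe : 0 < x / Real.exp 1 := by positivity
  have h1 : Real.sqrt (2 * π * x) = Real.exp (Real.log (2 * π * x) / 2) := by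
    rw [Real.sqrt_eq_rpow, Real.rpow_def_of_pos h2πx]
    ring_nf
  have h2 : (x / Real.exp 1) ^ x = Real.exp (x * (Real.log x - 1)) := by
    rw [Real.rpow_def_of_pos hxe, Real.log_div (ne_of_gt hx) (Real.exp_ne_zero 1),
      Real.log_exp]
    ring_nf
  rw [stirlingLambda, sG, exp_sub, exp_sub, Real.exp_log hΓ, h1, h2, div_div]

lemma sG_sub {x : ℝ} (hx : 0 < x) : sG x - sG (x + 1) = sH x := by
  have hx1 : (0:ℝ) < x + 1 := by linarith
  have hΓ : 0 < Real.Gamma (x + 1) := Real.Gamma_pos_of_pos (by linarith)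
  have hG : Real.Gamma (x + 1 + 1) = (x + 1) * Real.Gamma (x + 1) :=
    Real.Gamma_add_one (by positivity)
  have h2π : (2 * π : ℝ) ≠ 0 := by positivity
  rw [sG, sG, hG, Real.log_mul (ne_of_gt hx1) (ne_of_gt hΓ),
    show 2 * π * (x+1) = (2*π) * (x+1) by ring,
    show 2 * π * x = (2*π) * x by ring,
    Real.log_mul h2π (ne_of_gt hx1), Real.log_mul h2π (ne_of_gt hx), sH]
  ring

lemma hasDerivAt_sQ {t : ℝ} (ht : 0 < t) :
    HasDerivAt sQ (-(1 / (2 * t ^ 2 * (t + 1) ^ 2))) t := by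
  have ht1 : (0:ℝ) < t + 1 := by linarith
  have e1 : HasDerivAt (fun t : ℝ => 2 * t) 2 t := by
    simpa using (hasDerivAt_id t).const_mul 2
  have e2 : HasDerivAt (fun t : ℝ => 2 * (t + 1)) 2 t := by
    simpa using ((hasDerivAt_id t).add_const 1).const_mul 2
  have h1 : HasDerivAt (fun t : ℝ => 1 / (2 * t)) ((0 * (2 * t) - 1 * 2) / (2 * t) ^ 2) t :=
    (hasDerivAt_const t 1).div e1 (by positivity)
  have h2 : HasDerivAt (fun t : ℝ => 1 / (2 * (t + 1)))
      ((0 * (2 * (t + 1)) - 1 * 2) / (2 * (t + 1)) ^ 2) t :=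
    (hasDerivAt_const t 1).div e2 (by positivity)
  have h3 : HasDerivAt (fun t : ℝ => Real.log (t + 1) - Real.log t) (1 / (t + 1) - 1 / t) t := by
    have ha := ((hasDerivAt_id t).add_const 1).log (ne_of_gt ht1)
    have hb := (hasDerivAt_id t).log (ne_of_gt ht)
    simpa using ha.fun_sub hb
  have := (h1.fun_add h2).fun_sub h3
  refine this.congr_deriv ?_
  field_simp
  ring

lemma hasDerivAt_sH {t : ℝ} (ht : 0 < t) : HasDerivAt sH (-(sQ t)) t := by
  have ht1 : (0:ℝ) < t + 1 := by linarith
  have h3 : HasDerivAt (fun t : ℝ => Real.log (t + 1) - Real.log t) (1 / (t + 1) - 1 / t) t := by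
    have ha := ((hasDerivAt_id t).add_const 1).log (ne_of_gt ht1)
    have hb := (hasDerivAt_id t).log (ne_of_gt ht)
    simpa using ha.fun_sub hb
  have h0 : HasDerivAt (fun t : ℝ => t + 1 / 2) 1 t := (hasDerivAt_id t).add_const _
  have := (h0.fun_mul h3).sub_const 1
  refine this.congr_deriv ?_
  rw [sQ]
  field_simp
  ring

lemma sQ_strictAnti : StrictAntiOn sQ (Set.Ioi 0) := by
  refine strictAntiOn_of_deriv_neg (convex_Ioi 0)
    (fun x hx => (hasDerivAt_sQ hx).continuousAt.continuousWithinAt) ?_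
  intro x hx
  rw [interior_Ioi] at hx
  rw [(hasDerivAt_sQ hx).deriv]
  have hx' : (0:ℝ) < x := hx
  have : (0:ℝ) < 1 / (2 * x ^ 2 * (x + 1) ^ 2) := by positivity
  linarith

lemma sQ_tendsto : Tendsto sQ atTop (𝓝 0) := by
  have h1 : Tendsto (fun t : ℝ => 1 / (2 * t)) atTop (𝓝 0) :=
    tendsto_const_nhds.div_atTop (tendsto_id.const_mul_atTop two_pos)
  have h2 : Tendsto (fun t : ℝ => 1 / (2 * (t + 1))) atTop (𝓝 0) :=
    tendsto_const_nhds.div_atTop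
      ((tendsto_atTop_add_const_right _ 1 tendsto_id).const_mul_atTop two_pos)
  have h3 : Tendsto (fun t : ℝ => Real.log (t + 1) - Real.log t) atTop (𝓝 0) := by
    have hr : Tendsto (fun t : ℝ => (t + 1) / t) atTop (𝓝 1) := by
      have : Tendsto (fun t : ℝ => 1 + 1 / t) atTop (𝓝 (1 + 0)) :=
        tendsto_const_nhds.add (tendsto_const_nhds.div_atTop tendsto_id)
      rw [add_zero] at this
      refine this.congr' ?_
      filter_upwards [eventually_gt_atTop (0:ℝ)] with t ht
      field_simp
    have := (hr.log one_ne_zero)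
    rw [Real.log_one] at this
    refine this.congr' ?_
    filter_upwards [eventually_gt_atTop (0:ℝ)] with t ht
    rw [Real.log_div (by positivity) (ne_of_gt ht)]
  have h := (h1.add h2).sub h3
  simp only [add_zero, zero_add, sub_zero] at h
  exact h

lemma sQ_pos {t : ℝ} (ht : 0 < t) : 0 < sQ t := by
  have h2 : 0 ≤ sQ (t + 1) := by
    refine le_of_tendsto sQ_tendsto ?_
    filter_upwards [eventually_gt_atTop (t + 1)] with s hs
    exact le_of_lt <| sQ_strictAnti (Set.mem_Ioi.2 (by linarith)) (Set.mem_Ioi.2 (by linarith)) hs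
  have h3 : sQ (t + 1) < sQ t := sQ_strictAnti (Set.mem_Ioi.2 ht)
    (Set.mem_Ioi.2 (by linarith)) (by linarith)
  linarith

lemma sH_strictAnti : StrictAntiOn sH (Set.Ioi 0) := by
  refine strictAntiOn_of_deriv_neg (convex_Ioi 0)
    (fun x hx => (hasDerivAt_sH hx).continuousAt.continuousWithinAt) ?_
  intro x hx
  rw [interior_Ioi] at hx
  rw [(hasDerivAt_sH hx).deriv]
  linarith [sQ_pos hx]

lemma sG_telescope {x : ℝ} (hx : 0 < x) (n : ℕ) :
    sG x - sG (x + n) = ∑ k ∈ range n, sH (x + k) := by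
  induction n with
  | zero => simp
  | succ n ih =>
    have hn : (0:ℝ) ≤ n := n.cast_nonneg
    have hxn : 0 < x + n := by linarith
    have hc : x + ((n + 1 : ℕ) : ℝ) = (x + n) + 1 := by push_cast; ring
    rw [sum_range_succ, ← ih, hc, ← sG_sub hxn]
    ring

lemma Gamma_prod (s : ℝ) (hs : 0 < s) (n : ℕ) :
    Real.Gamma (s + n) = (∏ j ∈ range n, (s + j)) * Real.Gamma s := by
  induction n with
  | zero => simp
  | succ n ih =>
    have hn : (0:ℝ) ≤ n := n.cast_nonneg
    have h2 : (0:ℝ) < s + n := by linarith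
    have h1 : s + ((n + 1 : ℕ) : ℝ) = (s + n) + 1 := by push_cast; ring
    rw [h1, Real.Gamma_add_one (ne_of_gt h2), ih, prod_range_succ]
    ring

lemma tendsto_log_diff (a b : ℝ) (ha : 0 < a) (hb : 0 < b) :
    Tendsto (fun n : ℕ => Real.log (a + n) - Real.log (b + n)) atTop (𝓝 0) := by
  have ha' : ∀ n : ℕ, (0:ℝ) < a + n := fun n => by
    have : (0:ℝ) ≤ n := n.cast_nonneg; linarith
  have hb' : ∀ n : ℕ, (0:ℝ) < b + n := fun n => by
    have : (0:ℝ) ≤ n := n.cast_nonneg; linarith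
  have h0 : Tendsto (fun n : ℕ => (a - b) / (b + n)) atTop (𝓝 0) :=
    tendsto_const_nhds.div_atTop
      (tendsto_atTop_add_const_left _ b tendsto_natCast_atTop_atTop)
  have h1 : Tendsto (fun n : ℕ => (a + n) / (b + n)) atTop (𝓝 1) := by
    have h := (tendsto_const_nhds : Tendsto (fun _ : ℕ => (1:ℝ)) atTop (𝓝 1)).add h0
    rw [add_zero] at h
    refine (h : Tendsto (fun n : ℕ => 1 + (a - b) / (b + n)) atTop (𝓝 1)).congr fun n => ?_
    field_simp
    ring
  have h2 := h1.log one_ne_zero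
  rw [Real.log_one] at h2
  exact h2.congr fun n => Real.log_div (ne_of_gt (ha' n)) (ne_of_gt (hb' n))

lemma tendsto_sQhelper (x : ℝ) (hx : 0 < x) :
    Tendsto (fun n : ℕ => (x + n) * Real.log (x + n) - x * Real.log n
      - n * Real.log n - x) atTop (𝓝 0) := by
  have hA : Tendsto (fun n : ℕ => 1 + x / n) atTop (𝓝 1) := by
    have h := (tendsto_const_nhds : Tendsto (fun _ : ℕ => (1:ℝ)) atTop (𝓝 1)).add
      (tendsto_const_div_atTop_nhds_zero_nat x)
    rwa [add_zero] at h
  have hlog : Tendsto (fun n : ℕ => Real.log (1 + x / n)) atTop (𝓝 0) := by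
    have h := hA.log one_ne_zero
    rwa [Real.log_one] at h
  have hpow : Tendsto (fun n : ℕ => Real.log ((1 + x / n) ^ n)) atTop (𝓝 x) := by
    have h := (Real.tendsto_one_add_div_pow_exp x).log (Real.exp_ne_zero x)
    rwa [Real.log_exp] at h
  have hn : Tendsto (fun n : ℕ => (n : ℝ) * Real.log (1 + x / n)) atTop (𝓝 x) :=
    hpow.congr fun n => by rw [Real.log_pow]
  have hx' : Tendsto (fun n : ℕ => x * Real.log (1 + x / n)) atTop (𝓝 0) := by
    have h := hlog.const_mul x
    rwa [mul_zero] at h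
  have h := (hx'.add hn).sub (tendsto_const_nhds : Tendsto (fun _ : ℕ => x) atTop (𝓝 x))
  rw [zero_add, sub_self] at h
  refine h.congr' ?_
  filter_upwards [eventually_ge_atTop 1] with n hn1
  have hn0 : (0:ℝ) < n := by exact_mod_cast hn1
  have hfrac : (0:ℝ) < 1 + x / n := by positivity
  have hxn : (x + n : ℝ) = n * (1 + x / n) := by field_simp; ring
  have hlogsum : Real.log (x + n) = Real.log n + Real.log (1 + x / n) := by
    rw [hxn, Real.log_mul (ne_of_gt hn0) (ne_of_gt hfrac)]
  rw [hlogsum]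
  ring

lemma tendsto_sPhelper (x : ℝ) (hx : 0 < x) :
    Tendsto (fun n : ℕ => Real.log (Real.Gamma (x + n + 1)) - (x + 1) * Real.log n
      - Real.log (n.factorial) + Real.log (x + n + 1)) atTop (𝓝 0) := by
  have hs0 : 0 < x + 1 := by linarith
  have hΓ : 0 < Real.Gamma (x + 1) := Real.Gamma_pos_of_pos hs0
  have hratio : Tendsto (fun n : ℕ => Real.Gamma (x + 1) / Real.GammaSeq (x + 1) n)
      atTop (𝓝 1) := by
    have h := (tendsto_const_nhds (x := Real.Gamma (x + 1))).div
      (Real.GammaSeq_tendsto_Gamma (x + 1)) (ne_of_gt hΓ)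
    rwa [div_self (ne_of_gt hΓ)] at h
  have hlog := hratio.log one_ne_zero
  rw [Real.log_one] at hlog
  refine hlog.congr' ?_
  filter_upwards [eventually_ge_atTop 1] with n hn1
  have hn0 : (0:ℝ) < n := by exact_mod_cast hn1
  have hnn : (0:ℝ) ≤ n := le_of_lt hn0
  have hpp : (0:ℝ) < ∏ j ∈ range n, (x + 1 + j) :=
    prod_pos fun j _ => by have : (0:ℝ) ≤ j := j.cast_nonneg; linarith
  have hpp1 : (0:ℝ) < ∏ j ∈ range (n + 1), (x + 1 + j) :=
    prod_pos fun j _ => by have : (0:ℝ) ≤ j := j.cast_nonneg; linarith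
  have hfac : (0:ℝ) < (n.factorial : ℝ) := by exact_mod_cast n.factorial_pos
  have hrp : (0:ℝ) < (n : ℝ) ^ (x + 1 : ℝ) := Real.rpow_pos_of_pos hn0 _
  have hxn1 : (0:ℝ) < x + n + 1 := by linarith
  have hΓn : 0 < Real.Gamma (x + n + 1) := Real.Gamma_pos_of_pos hxn1
  have hseq_pos : 0 < Real.GammaSeq (x + 1) n := by
    rw [Real.GammaSeq]
    positivity
  have hG1 : Real.Gamma (x + n + 1) = (∏ j ∈ range n, (x + 1 + j)) * Real.Gamma (x + 1) := by
    have := Gamma_prod (x + 1) hs0 n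
    rw [show x + 1 + (n : ℝ) = x + n + 1 by ring] at this
    exact this
  have key : Real.Gamma (x + 1) / Real.GammaSeq (x + 1) n
      = Real.Gamma (x + n + 1) * (x + n + 1) / ((n : ℝ) ^ (x + 1 : ℝ) * (n.factorial : ℝ)) := by
    rw [Real.GammaSeq, hG1, prod_range_succ, div_div_eq_mul_div]
    ring
  rw [key, Real.log_div (by positivity) (by positivity),
    Real.log_mul (ne_of_gt hΓn) (ne_of_gt hxn1),
    Real.log_mul (ne_of_gt hrp) (ne_of_gt hfac), Real.log_rpow hn0]
  ring

lemma tendsto_tail {x₁ x₂ : ℝ} (h₁ : 0 < x₁) (h₂ : 0 < x₂) :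
    Tendsto (fun n : ℕ => sG (x₁ + n) - sG (x₂ + n)) atTop (𝓝 0) := by
  have hP := (tendsto_sPhelper x₁ h₁).sub (tendsto_sPhelper x₂ h₂)
  have hQ := (tendsto_sQhelper x₁ h₁).sub (tendsto_sQhelper x₂ h₂)
  have hL1 : Tendsto (fun n : ℕ => Real.log (x₂ + n + 1) - Real.log (x₁ + n + 1))
      atTop (𝓝 0) := by
    have h := tendsto_log_diff (x₂ + 1) (x₁ + 1) (by linarith) (by linarith)
    exact h.congr fun n => by
      rw [show x₂ + 1 + (n : ℝ) = x₂ + n + 1 by ring, show x₁ + 1 + (n : ℝ) = x₁ + n + 1 by ring]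
  have hL2 := (tendsto_log_diff x₁ x₂ h₁ h₂).const_mul (1 / 2 : ℝ)
  have hcomb := ((hP.sub hQ).add hL1).sub hL2
  have hzero : ((0:ℝ) - 0 - (0 - 0) + 0 - 1 / 2 * 0) = 0 := by ring
  rw [hzero] at hcomb
  refine hcomb.congr fun n => ?_
  have hn : (0:ℝ) ≤ n := n.cast_nonneg
  have h2π : (2 * π : ℝ) ≠ 0 := by positivity
  have e₁ : Real.log (2 * π * (x₁ + n)) = Real.log (2 * π) + Real.log (x₁ + n) :=
    Real.log_mul h2π (by positivity)
  have e₂ : Real.log (2 * π * (x₂ + n)) = Real.log (2 * π) + Real.log (x₂ + n) :=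
    Real.log_mul h2π (by positivity)
  simp only [sG]
  rw [e₁, e₂]
  ring

lemma sG_anti {x₁ x₂ : ℝ} (h₁ : 0 < x₁) (h₁₂ : x₁ < x₂) : sG x₂ < sG x₁ := by
  have h₂ : 0 < x₂ := lt_trans h₁ h₁₂
  have hδpos : 0 < sH x₁ - sH x₂ :=
    sub_pos.2 (sH_strictAnti (Set.mem_Ioi.2 h₁) (Set.mem_Ioi.2 h₂) h₁₂)
  have key : ∀ n : ℕ, 1 ≤ n →
      sH x₁ - sH x₂ ≤ (sG x₁ - sG x₂) - (sG (x₁ + n) - sG (x₂ + n)) := by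
    intro n hn
    have e : (sG x₁ - sG x₂) - (sG (x₁ + n) - sG (x₂ + n))
        = ∑ k ∈ range n, (sH (x₁ + k) - sH (x₂ + k)) := by
      rw [Finset.sum_sub_distrib, ← sG_telescope h₁ n, ← sG_telescope h₂ n]
      ring
    rw [e]
    have nonneg : ∀ k ∈ range n, 0 ≤ sH (x₁ + k) - sH (x₂ + k) := by
      intro k _
      have hk : (0:ℝ) ≤ k := k.cast_nonneg
      have := sH_strictAnti (Set.mem_Ioi.2 (by linarith : (0:ℝ) < x₁ + k))
        (Set.mem_Ioi.2 (by linarith : (0:ℝ) < x₂ + k)) (by linarith)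
      linarith
    have h0 := Finset.single_le_sum nonneg (mem_range.2 hn)
    simp only [Nat.cast_zero, add_zero] at h0
    exact h0
  have htail := tendsto_tail h₁ h₂
  have hlim : Tendsto (fun n : ℕ => (sG x₁ - sG x₂) - (sG (x₁ + n) - sG (x₂ + n)))
      atTop (𝓝 (sG x₁ - sG x₂)) := by
    have h := (tendsto_const_nhds (x := sG x₁ - sG x₂)).sub htail
    rwa [sub_zero] at h
  have hfin : sH x₁ - sH x₂ ≤ sG x₁ - sG x₂ := by
    refine ge_of_tendsto hlim ?_
    filter_upwards [eventually_ge_atTop 1] with n hn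
    exact key n hn
  linarith

/-- The function `λ` is strictly decreasing on `(0, ∞)`. -/
theorem stirlingLambda_strictAnti :
    ∀ x₁ x₂ : ℝ, 0 < x₁ → x₁ < x₂ → stirlingLambda x₁ > stirlingLambda x₂ := by
  intro x₁ x₂ h₁ h₁₂
  have h₂ : 0 < x₂ := lt_trans h₁ h₁₂
  rw [gt_iff_lt, stirlingLambda_eq h₂, stirlingLambda_eq h₁]
  have h := Real.exp_lt_exp.mpr (sG_anti h₁ h₁₂)
  linarith
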